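/- Let S be a finite p-group for odd p. Then the index |J(S)𝔛(S) : 𝔛(S)| is not equal to p. -/

import Mathlib

/-!
Suppose `|J(S)𝔛(S) : 𝔛(S)| = p`. Take an elementary abelian `E` of maximal rank and `e ∈ E \ 𝔛`;
then `J(S)𝔛(S) = 𝔛⟨e⟩` and `|E : E ∩ 𝔛| = p`. Since `C_S(𝔛) ≤ 𝔛`, the group `Ω = Ω₁(C_S(𝔛))` is
elementary abelian and commutes with `E ∩ 𝔛`, so `(E ∩ 𝔛)Ω` is elementary abelian and, by
maximality of the rank, `|(E ∩ 𝔛)Ω : E ∩ 𝔛| ≤ p`. The homomorphism `w ↦ [w, e]` on `Ω` kills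
`Ω ∩ E`, so its image `Φ` has order at most `p`; being normalized by the element `e` of order `p`,
`Φ` is centralized by `e`. Hence `[Ω, 𝔛⟨e⟩, 𝔛⟨e⟩] = 1`, and as `p - 1 ≥ 2` the normal subgroup
`𝔛⟨e⟩` extends Oliver's chain for `𝔛`, contradicting `e ∉ 𝔛`. The same extension argument, applied
to an element of `C_S(𝔛)` that is central modulo `𝔛`, proves `C_S(𝔛) ≤ 𝔛`.
-/

/-- Iterated commutator of subgroups: `[A,B;0] = A`, `[A,B;k+1] = ⁅[A,B;k], B⁆`,
so `[A,B;1] = ⁅A,B⁆` and `[A,B;k] = [[A,B;k-1],B]`. -/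
def iterCommutator {G : Type*} [Group G] (A B : Subgroup G) : ℕ → Subgroup G
  | 0 => A
  | k + 1 => ⁅iterCommutator A B k, B⁆

/-- `Ω₁(P)`: the subgroup generated by the elements of `P` of order dividing `p`. -/
def Omega1 {G : Type*} [Group G] (p : ℕ) (P : Subgroup G) : Subgroup G :=
  Subgroup.closure {x | x ∈ P ∧ x ^ p = 1}

/-- Oliver's condition (∗) for a chain `⊥ = Q 0 ≤ Q 1 ≤ ⋯ ≤ Q n` of normal subgroups:
`[Ω₁(C_G(Q i)), Q (i+1); p-1] = 1` for all `i < n`. -/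
def IsOliverChain {G : Type*} [Group G] (p : ℕ) (Q : ℕ → Subgroup G) (n : ℕ) : Prop :=
  Q 0 = ⊥ ∧ (∀ i < n, Q i ≤ Q (i + 1)) ∧ (∀ i ≤ n, (Q i).Normal) ∧
    ∀ i < n,
      iterCommutator (Omega1 p (Subgroup.centralizer (Q i : Set G))) (Q (i + 1)) (p - 1) = ⊥

/-- A (normal) subgroup `K` admits a chain witnessing Oliver's condition (∗). -/
def HasOliverChain {G : Type*} [Group G] (p : ℕ) (K : Subgroup G) : Prop :=
  ∃ n Q, IsOliverChain p Q n ∧ Q n = K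

/-- The Oliver subgroup `𝔛(G)`: the largest normal subgroup of `G` admitting a chain of
`G`-normal subgroups satisfying Oliver's condition (∗). -/
def OliverSubgroup (p : ℕ) (G : Type*) [Group G] : Subgroup G :=
  sSup {K | HasOliverChain p K}

/-- `E` is an elementary abelian `p`-subgroup. -/
def IsElemAbelian {G : Type*} [Group G] (p : ℕ) (E : Subgroup G) : Prop :=
  (∀ a ∈ E, ∀ b ∈ E, a * b = b * a) ∧ ∀ x ∈ E, x ^ p = 1

/-- The rank of a finite elementary abelian `p`-subgroup `E` (so `|E| = p ^ elemRank p E`). -/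
noncomputable def elemRank {G : Type*} [Group G] (p : ℕ) (E : Subgroup G) : ℕ :=
  (Nat.card E).factorization p

/-- The `p`-rank of `G`: the maximal rank of an elementary abelian `p`-subgroup. -/
noncomputable def pRank (p : ℕ) (G : Type*) [Group G] : ℕ :=
  sSup {n | ∃ E : Subgroup G, IsElemAbelian p E ∧ elemRank p E = n}

/-- The Thompson subgroup `J(G)`, generated by all elementary abelian `p`-subgroups of
rank equal to the `p`-rank of `G`. -/
def Thompson (p : ℕ) (G : Type*) [Group G] : Subgroup G :=
  sSup {E | IsElemAbelian p E ∧ elemRank p E = pRank p G}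

open scoped commutatorElement
open Subgroup

section Commutators

variable {G : Type*} [Group G]

theorem commutator_le_iff_le_comap_centralizer {A B N : Subgroup G} [N.Normal] :
    ⁅A, B⁆ ≤ N ↔ B ≤ (centralizer (A.map (QuotientGroup.mk' N) : Set (G ⧸ N))).comap
      (QuotientGroup.mk' N) := by
  rw [← map_le_iff_le_comap, ← le_centralizer_iff, ← commutator_eq_bot_iff_le_centralizer,
    ← map_commutator, Subgroup.map_eq_bot_iff, QuotientGroup.ker_mk']

theorem commutator_sup_right_le {A B C N : Subgroup G} [N.Normal]
    (hB : ⁅A, B⁆ ≤ N) (hC : ⁅A, C⁆ ≤ N) : ⁅A, B ⊔ C⁆ ≤ N := by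
  rw [commutator_le_iff_le_comap_centralizer] at *
  exact sup_le hB hC

theorem conj_eq_of_mem_centralizer {M : Subgroup G} {x m : G} (hx : x ∈ centralizer M)
    (hm : m ∈ M) : x * m * x⁻¹ = m := by
  rw [← hx m hm, mul_inv_cancel_right]

theorem commutator_closure_le_of_le_centralizer {A M : Subgroup G} {s : Set G}
    (hs : closure s ≤ centralizer M) (h : ∀ a ∈ A, ∀ x ∈ s, ⁅a, x⁆ ∈ M) :
    ⁅A, closure s⁆ ≤ M := by
  rw [commutator_le]
  intro a ha y hy
  induction hy using closure_induction with
  | mem x hx => exact h a ha x hx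
  | one => simp
  | mul x y hx _ ihx ihy =>
    have : ⁅a, x * y⁆ = ⁅a, x⁆ * (x * ⁅a, y⁆ * x⁻¹) := by
      simp only [commutatorElement_def]; group
    rw [this, conj_eq_of_mem_centralizer (hs hx) ihy]
    exact mul_mem ihx ihy
  | inv x hx ih =>
    have : ⁅a, x⁻¹⁆ = x⁻¹ * ⁅a, x⁆⁻¹ * x⁻¹⁻¹ := by
      simp only [commutatorElement_def]; group
    rw [this, conj_eq_of_mem_centralizer (hs (inv_mem hx)) (inv_mem ih)]
    exact inv_mem ih

theorem commutator_commutator_sup_zpowers_eq_bot {Ω X M : Subgroup G} {c : G}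
    (hΩX : Ω ≤ centralizer X) (hMΩ : M ≤ Ω) (hcM : c ∈ centralizer M)
    (hc : ∀ w ∈ Ω, ⁅w, c⁆ ∈ M) :
    ⁅⁅Ω, X ⊔ zpowers c⁆, X ⊔ zpowers c⁆ = ⊥ := by
  have hR : X ⊔ zpowers c = closure (X ∪ {c}) := by
    rw [Subgroup.closure_union, closure_eq, zpowers_eq_closure]
  have hMR : M ≤ centralizer ((X ⊔ zpowers c : Subgroup G) : Set G) := by
    rw [hR, centralizer_closure]
    rintro m hm x (hx | rfl)
    · exact hΩX (hMΩ hm) x hx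
    · exact (hcM m hm).symm
  have hΩR : ⁅Ω, X ⊔ zpowers c⁆ ≤ M := by
    rw [hR] at hMR ⊢
    refine commutator_closure_le_of_le_centralizer (le_centralizer_iff.1 hMR) ?_
    rintro w hw x (hx | rfl)
    · rw [commutatorElement_eq_one_iff_mul_comm.2 (hΩX hw x hx).symm]
      exact one_mem M
    · exact hc w hw
  exact commutator_eq_bot_iff_le_centralizer.2 (hΩR.trans hMR)

theorem commutator_mem_of_mk_mem_center {N : Subgroup G} [N.Normal] {c : G}
    (hc : (c : G ⧸ N) ∈ center (G ⧸ N)) (g : G) : ⁅g, c⁆ ∈ N := by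
  rw [← QuotientGroup.eq_one_iff, ← QuotientGroup.mk'_apply, map_commutatorElement,
    commutatorElement_eq_one_iff_mul_comm]
  exact mem_center_iff.1 hc _

theorem normal_sup_zpowers_of_mk_mem_center {N : Subgroup G} [N.Normal] {c : G}
    (hc : (c : G ⧸ N) ∈ center (G ⧸ N)) : (N ⊔ zpowers c).Normal := by
  have hZ : (zpowers (c : G ⧸ N)).Normal :=
    ⟨fun z hz g => by
      rw [mem_center_iff.1 (zpowers_le.2 hc hz) g, mul_inv_cancel_right]
      exact hz⟩
  have := hZ.comap (QuotientGroup.mk' N)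
  rwa [← QuotientGroup.mk'_apply, ← MonoidHom.map_zpowers, comap_map_eq, QuotientGroup.ker_mk',
    sup_comm] at this

end Commutators

section Index

variable {G : Type*} [Group G]

theorem eq_of_relIndex_prime {H L K : Subgroup G} (hHL : H ≤ L) (hLK : L ≤ K)
    (hp : (H.relIndex K).Prime) (hLH : ¬L ≤ H) : L = K := by
  have hmul := relIndex_mul_relIndex H L K hHL hLK
  obtain h | h := (Nat.dvd_prime hp).1 (Dvd.intro _ hmul)
  · exact absurd (relIndex_eq_one.1 h) hLH
  · rw [h, mul_eq_left₀ hp.ne_zero] at hmul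
    exact le_antisymm hLK (relIndex_eq_one.1 hmul)

end Index

section PGroup

variable {G : Type*} [Group G] {p : ℕ} [Fact p.Prime]

theorem IsPGroup.exists_ne_one_mem_center_of_normal [Finite G] (hG : IsPGroup p G)
    {N : Subgroup G} [N.Normal] (hN : N ≠ ⊥) :
    ∃ x ∈ N, x ≠ 1 ∧ x ∈ center G := by
  have hdvd : p ∣ Nat.card N := by
    obtain ⟨k, hk0, hk⟩ := (hG.to_subgroup N).nontrivial_iff_card.1 ((nontrivial_iff_ne_bot N).2 hN)
    exact hk ▸ dvd_pow_self p hk0.ne'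
  obtain ⟨x, hx, hx1⟩ := (hG.of_equiv ConjAct.toConjAct)
    |>.exists_fixed_point_of_prime_dvd_card_of_fixed_point N hdvd (a := 1) fun g => smul_one g
  refine ⟨x, x.2, fun h => hx1 (Subtype.ext h.symm), mem_center_iff.2 fun g => ?_⟩
  exact mul_inv_eq_iff_eq_mul.1 (congrArg Subtype.val (hx (ConjAct.toConjAct g)))

-- Conjugation by `g` acts on `⟨f⟩ ≅ ℤ/p` as `f ↦ f ^ k`; `g ^ p = 1` forces `k ^ p ≡ 1`, while
-- Fermat gives `k ^ p ≡ k` (mod `p`).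
theorem conj_eq_self_of_conj_mem_zpowers {f g : G} (hf : orderOf f = p) (hg : g ^ p = 1)
    (h : g * f * g⁻¹ ∈ zpowers f) : g * f * g⁻¹ = f := by
  obtain ⟨k, hk⟩ := mem_zpowers_iff.1 h
  have hiter : ∀ j : ℕ, g ^ j * f * (g ^ j)⁻¹ = f ^ (k ^ j) := by
    intro j
    induction j with
    | zero => simp
    | succ j ih =>
      calc g ^ (j + 1) * f * (g ^ (j + 1))⁻¹ = g * (g ^ j * f * (g ^ j)⁻¹) * g⁻¹ := by
            rw [pow_succ']; group
        _ = f ^ (k ^ (j + 1)) := by rw [ih, ← conj_zpow, ← hk, ← zpow_mul, pow_succ', mul_comm]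
  have hkp : f ^ (k ^ p) = f ^ (1 : ℤ) := by rw [← hiter p, hg]; simp
  rw [zpow_eq_zpow_iff_modEq, hf, ← ZMod.intCast_eq_intCast_iff] at hkp
  push_cast at hkp
  rw [ZMod.pow_card] at hkp
  rw [← hk, ← zpow_one f, ← zpow_mul, one_mul, zpow_eq_zpow_iff_modEq, hf,
    ← ZMod.intCast_eq_intCast_iff, hkp, Int.cast_one]

theorem mem_centralizer_of_card_le_prime [Finite G] {H : Subgroup G} {g : G} (hH : Nat.card H ≤ p)
    (hHp : ∀ h ∈ H, h ^ p = 1) (hg : g ^ p = 1) (hgH : ∀ h ∈ H, g * h * g⁻¹ ∈ H) :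
    g ∈ centralizer H := by
  intro f hf
  by_cases hf1 : f = 1
  · simp [hf1]
  have hof : orderOf f = p := orderOf_eq_prime (hHp f hf) hf1
  have hfH : zpowers f = H :=
    eq_of_le_of_card_ge (zpowers_le.2 hf) (by rwa [Nat.card_zpowers, hof])
  have hconj := conj_eq_self_of_conj_mem_zpowers hof hg (hfH ▸ hgH f hf)
  exact (mul_inv_eq_iff_eq_mul.1 hconj).symm

end PGroup

section CommutatorHom

variable {G : Type*} [Group G]

def commutatorHom (N : Subgroup G) [N.Normal] (hN : N ≤ centralizer N) (g : G) : N →* G where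
  toFun w := ⁅(w : G), g⁆
  map_one' := commutatorElement_one_left g
  map_mul' v w := by
    have hv : g * (v : G)⁻¹ * g⁻¹ ∈ N := Normal.conj_mem ‹_› _ (inv_mem v.2) g
    have hw : g * (w : G)⁻¹ * g⁻¹ ∈ N := Normal.conj_mem ‹_› _ (inv_mem w.2) g
    calc ⁅((v * w : N) : G), g⁆
        = v * ((w * (g * (w : G)⁻¹ * g⁻¹)) * (g * (v : G)⁻¹ * g⁻¹)) := by
          simp only [coe_mul, commutatorElement_def]; group
      _ = v * ((g * (v : G)⁻¹ * g⁻¹) * (w * (g * (w : G)⁻¹ * g⁻¹))) := by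
          rw [hN hv _ (mul_mem w.2 hw)]
      _ = ⁅(v : G), g⁆ * ⁅(w : G), g⁆ := by
          simp only [commutatorElement_def]; group

variable {N : Subgroup G} [N.Normal] (hN : N ≤ centralizer N) (g : G)

theorem commutatorHom_apply (w : N) : commutatorHom N hN g w = ⁅(w : G), g⁆ := rfl

theorem range_commutatorHom_le : (commutatorHom N hN g).range ≤ N := by
  rintro _ ⟨w, rfl⟩
  exact commutator_le_left N ⊤ (commutator_mem_commutator w.2 (mem_top g))

theorem conj_mem_range_commutatorHom {f : G} (hf : f ∈ (commutatorHom N hN g).range) :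
    g * f * g⁻¹ ∈ (commutatorHom N hN g).range := by
  obtain ⟨w, rfl⟩ := hf
  refine ⟨⟨g * w * g⁻¹, Normal.conj_mem ‹_› _ w.2 g⟩, ?_⟩
  simp only [commutatorHom_apply, commutatorElement_def]
  group

theorem card_range_commutatorHom_le_relIndex [Finite G] {F : Subgroup G}
    (hF : F ≤ centralizer {g}) : Nat.card (commutatorHom N hN g).range ≤ F.relIndex N := by
  rw [← Subgroup.index_ker, relIndex]
  refine index_antitone fun w hw => ?_
  rw [MonoidHom.mem_ker, commutatorHom_apply, commutatorElement_eq_one_iff_mul_comm]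
  exact (hF hw g rfl).symm

end CommutatorHom

section ElemAbelian

variable {G : Type*} [Group G] {p : ℕ}

theorem IsElemAbelian.le_centralizer {E : Subgroup G} (hE : IsElemAbelian p E) :
    E ≤ centralizer E :=
  fun a ha b hb => hE.1 b hb a ha

theorem IsElemAbelian.of_le {E F : Subgroup G} (hE : IsElemAbelian p E) (hFE : F ≤ E) :
    IsElemAbelian p F :=
  ⟨fun a ha b hb => hE.1 a (hFE ha) b (hFE hb), fun x hx => hE.2 x (hFE hx)⟩

theorem isElemAbelian_closure {s : Set G} (hs : s ⊆ centralizer s) (hsp : ∀ x ∈ s, x ^ p = 1) :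
    IsElemAbelian p (closure s) := by
  have hcomm : closure s ≤ centralizer (closure s : Set G) := by
    rw [centralizer_closure]
    exact (closure_le _).2 hs
  refine ⟨fun a ha b hb => hcomm hb a ha, fun x hx => ?_⟩
  induction hx using closure_induction with
  | mem x hx => exact hsp x hx
  | one => exact one_pow p
  | mul x y hx hy ihx ihy => rw [(show Commute x y from hcomm hy x hx).mul_pow, ihx, ihy, one_mul]
  | inv x _ ih => rw [inv_pow, ih, inv_one]

theorem IsElemAbelian.sup {E F : Subgroup G} (hE : IsElemAbelian p E) (hF : IsElemAbelian p F)
    (hEF : E ≤ centralizer F) : IsElemAbelian p (E ⊔ F) := by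
  rw [← closure_eq E, ← closure_eq F, ← Subgroup.closure_union]
  refine isElemAbelian_closure ?_ ?_
  · rintro x (hx | hx) y (hy | hy)
    · exact hE.1 y hy x hx
    · exact hEF hx y hy
    · exact (hEF hy x hx).symm
    · exact hF.1 y hy x hx
  · rintro x (hx | hx)
    exacts [hE.2 x hx, hF.2 x hx]

theorem IsElemAbelian.map {H : Type*} [Group H] {E : Subgroup G} (hE : IsElemAbelian p E)
    (f : G →* H) : IsElemAbelian p (E.map f) := by
  refine ⟨?_, ?_⟩
  · rintro _ ⟨a, ha, rfl⟩ _ ⟨b, hb, rfl⟩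
    rw [← map_mul, ← map_mul, hE.1 a ha b hb]
  · rintro _ ⟨a, ha, rfl⟩
    rw [← map_pow, hE.2 a ha, map_one]

theorem elemRank_map_of_injective {H : Type*} [Group H] (E : Subgroup G) {f : G →* H}
    (hf : Function.Injective f) : elemRank p (E.map f) = elemRank p E := by
  rw [elemRank, elemRank, card_map_of_injective hf]

theorem card_eq_pow_elemRank [Fact p.Prime] (hG : IsPGroup p G) (E : Subgroup G) [Finite E] :
    Nat.card E = p ^ elemRank p E := by
  obtain ⟨k, hk⟩ := IsPGroup.iff_card.1 (hG.to_subgroup E)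
  rw [elemRank, hk, Nat.Prime.factorization_pow Fact.out]
  simp

theorem elemRank_le_pRank [Finite G] {E : Subgroup G} (hE : IsElemAbelian p E) :
    elemRank p E ≤ pRank p G := by
  refine le_csSup ⟨(Nat.card G).factorization p, ?_⟩ ⟨E, hE, rfl⟩
  rintro _ ⟨E', -, rfl⟩
  exact (Nat.factorization_le_iff_dvd Nat.card_pos.ne' Nat.card_pos.ne').2
    (card_subgroup_dvd_card E') p

theorem card_le_pow_pRank [Fact p.Prime] [Finite G] (hG : IsPGroup p G) {E : Subgroup G}
    (hE : IsElemAbelian p E) : Nat.card E ≤ p ^ pRank p G :=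
  (card_eq_pow_elemRank hG E).trans_le
    (Nat.pow_le_pow_right (Fact.out : p.Prime).pos (elemRank_le_pRank hE))

instance thompson_characteristic : (Thompson p G).Characteristic := by
  refine characteristic_iff_map_le.2 fun ϕ => ?_
  rw [Thompson, (gc_map_comap _).l_sSup]
  refine iSup₂_le fun E ⟨hE, hrank⟩ => le_sSup ⟨hE.map _, ?_⟩
  rw [elemRank_map_of_injective E ϕ.injective, hrank]

end ElemAbelian

section Omega1

variable {G : Type*} [Group G] (p : ℕ)

theorem Omega1_le (P : Subgroup G) : Omega1 p P ≤ P :=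
  (closure_le _).2 fun _ hx => hx.1

theorem Omega1_mono {P Q : Subgroup G} (h : P ≤ Q) : Omega1 p P ≤ Omega1 p Q :=
  closure_mono fun _ hx => ⟨h hx.1, hx.2⟩

instance Omega1_normal (P : Subgroup G) [P.Normal] : (Omega1 p P).Normal := by
  refine ⟨fun n hn g => ?_⟩
  have hconj : (Omega1 p P).map (MulAut.conj g).toMonoidHom ≤ Omega1 p P := by
    rw [Omega1, MonoidHom.map_closure]
    refine closure_mono ?_
    rintro _ ⟨x, ⟨hxP, hxp⟩, rfl⟩
    refine ⟨Normal.conj_mem ‹_› x hxP g, ?_⟩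
    simp [conj_pow, hxp]
  exact hconj ⟨n, hn, rfl⟩

variable {p}

theorem isElemAbelian_Omega1_centralizer {X : Subgroup G} (hX : centralizer (X : Set G) ≤ X) :
    IsElemAbelian p (Omega1 p (centralizer (X : Set G))) :=
  isElemAbelian_closure (fun _ hx y hy => hx.1 y (hX hy.1)) fun _ hx => hx.2

end Omega1

section IterCommutator

variable {G : Type*} [Group G]

theorem iterCommutator_mono_left {A A' : Subgroup G} (B : Subgroup G) (h : A ≤ A') :
    ∀ k, iterCommutator A B k ≤ iterCommutator A' B k
  | 0 => h
  | k + 1 => commutator_mono (iterCommutator_mono_left B h k) le_rfl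

theorem iterCommutator_eq_bot_of_le {A B : Subgroup G} {j k : ℕ}
    (h : iterCommutator A B j = ⊥) (hjk : j ≤ k) : iterCommutator A B k = ⊥ := by
  induction hjk with
  | refl => exact h
  | step _ ih => exact (congrArg (⁅·, B⁆) ih).trans (commutator_bot_left B)

instance iterCommutator_normal (A B : Subgroup G) [A.Normal] [B.Normal] :
    ∀ k, (iterCommutator A B k).Normal
  | 0 => ‹_›
  | k + 1 => by
    have := iterCommutator_normal A B k
    exact commutator_normal _ _

theorem iterCommutator_le_left (A B : Subgroup G) [A.Normal] :
    ∀ k, iterCommutator A B k ≤ A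
  | 0 => le_rfl
  | k + 1 => (commutator_mono (iterCommutator_le_left A B k) le_rfl).trans (commutator_le_left A B)

theorem iterCommutator_sup_le {X K B : Subgroup G} [X.Normal] [B.Normal]
    (hXK : X ≤ centralizer K) : ∀ k, iterCommutator X (K ⊔ B) k ≤ iterCommutator X B k
  | 0 => le_rfl
  | k + 1 => by
    have hK : ⁅iterCommutator X (K ⊔ B) k, K⁆ = ⊥ :=
      commutator_eq_bot_iff_le_centralizer.2 ((iterCommutator_le_left X _ k).trans hXK)
    exact commutator_sup_right_le (hK.trans_le bot_le)
      (commutator_mono (iterCommutator_sup_le hXK k) le_rfl)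

end IterCommutator

section OliverChain

variable {G : Type*} [Group G] {p : ℕ}

theorem hasOliverChain_bot : HasOliverChain p (⊥ : Subgroup G) :=
  ⟨0, fun _ => ⊥, ⟨rfl, by simp, fun _ _ => inferInstance, by simp⟩, rfl⟩

theorem HasOliverChain.normal {K : Subgroup G} (hK : HasOliverChain p K) : K.Normal := by
  obtain ⟨n, Q, hQ, rfl⟩ := hK
  exact hQ.2.2.1 n le_rfl

theorem HasOliverChain.extend {K R : Subgroup G} (hK : HasOliverChain p K) (hKR : K ≤ R)
    [hR : R.Normal] (hcomm : iterCommutator (Omega1 p (centralizer (K : Set G))) R (p - 1) = ⊥) :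
    HasOliverChain p R := by
  obtain ⟨n, Q, ⟨h0, hmono, hnorm, hcond⟩, rfl⟩ := hK
  refine ⟨n + 1, fun i => if i ≤ n then Q i else R,
    ⟨by simpa using h0, fun i hi => ?_, fun i hi => ?_, fun i hi => ?_⟩, by simp⟩
  · rcases Nat.lt_succ_iff_lt_or_eq.1 hi with hi | rfl
    · simpa [hi.le, Nat.succ_le_of_lt hi] using hmono i hi
    · simpa using hKR
  · by_cases h : i ≤ n
    · simpa [h] using hnorm i h
    · simpa [h] using hR
  · rcases Nat.lt_succ_iff_lt_or_eq.1 hi with hi | rfl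
    · simpa [hi.le, Nat.succ_le_of_lt hi] using hcond i hi
    · simpa using hcomm

theorem HasOliverChain.sup {K L : Subgroup G} (hK : HasOliverChain p K)
    (hL : HasOliverChain p L) : HasOliverChain p (K ⊔ L) := by
  obtain ⟨m, Q, ⟨hQ0, hQmono, hQnorm, hQcond⟩, rfl⟩ := hL
  have := hK.normal
  suffices ∀ j ≤ m, HasOliverChain p (K ⊔ Q j) from this m le_rfl
  intro j hj
  induction j with
  | zero => rwa [hQ0, sup_bot_eq]
  | succ j ih =>
    have := hQnorm j (by omega)
    have := hQnorm (j + 1) hj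
    refine (ih (by omega)).extend (sup_le_sup_left (hQmono j hj) K) ?_
    have hΩK : Omega1 p (centralizer ((K ⊔ Q j : Subgroup G) : Set G)) ≤ centralizer K :=
      (Omega1_le _ _).trans (centralizer_le (SetLike.coe_subset_coe.2 le_sup_left))
    have hΩQ : Omega1 p (centralizer ((K ⊔ Q j : Subgroup G) : Set G)) ≤
        Omega1 p (centralizer (Q j : Set G)) :=
      Omega1_mono p (centralizer_le (SetLike.coe_subset_coe.2 le_sup_right))
    exact le_bot_iff.1 <| (iterCommutator_sup_le hΩK _).trans <|
      (iterCommutator_mono_left _ hΩQ _).trans (hQcond j hj).le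

theorem hasOliverChain_oliverSubgroup [Finite G] : HasOliverChain p (OliverSubgroup p G) :=
  SupClosed.sSup_mem (s := {K : Subgroup G | HasOliverChain p K})
    (fun _ hK _ hL => HasOliverChain.sup hK hL) (Set.toFinite _) hasOliverChain_bot subset_rfl

end OliverChain

section OliverSubgroup

variable {G : Type*} [Group G] {p : ℕ}

theorem oliverSubgroup_normal [Finite G] : (OliverSubgroup p G).Normal :=
  hasOliverChain_oliverSubgroup.normal

theorem mem_oliverSubgroup_of_commutator_mem [Finite G] (hp : 3 ≤ p) {c : G} {M : Subgroup G}
    [(OliverSubgroup p G ⊔ zpowers c).Normal]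
    (hM : M ≤ Omega1 p (centralizer (OliverSubgroup p G : Set G))) (hcM : c ∈ centralizer M)
    (hc : ∀ w ∈ Omega1 p (centralizer (OliverSubgroup p G : Set G)), ⁅w, c⁆ ∈ M) :
    c ∈ OliverSubgroup p G := by
  have hR := commutator_commutator_sup_zpowers_eq_bot (Omega1_le _ _) hM hcM hc
  have hchain := hasOliverChain_oliverSubgroup.extend le_sup_left
    (iterCommutator_eq_bot_of_le (j := 2) hR (by omega))
  have hle : OliverSubgroup p G ⊔ zpowers c ≤ OliverSubgroup p G := le_sSup hchain
  exact hle (mem_sup_right (mem_zpowers c))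

theorem centralizer_oliverSubgroup_le [Finite G] [Fact p.Prime] (hp : 3 ≤ p)
    (hG : IsPGroup p G) :
    centralizer (OliverSubgroup p G : Set G) ≤ OliverSubgroup p G := by
  set X := OliverSubgroup p G
  have : X.Normal := oliverSubgroup_normal
  by_contra hCX
  have hne : (centralizer (X : Set G)).map (QuotientGroup.mk' X) ≠ ⊥ := by
    rwa [Ne, Subgroup.map_eq_bot_iff, QuotientGroup.ker_mk']
  have := (normal_centralizer (H := X)).map _ (QuotientGroup.mk'_surjective X)
  obtain ⟨_, ⟨c, hcC, rfl⟩, hc1, hcZ⟩ := (hG.to_quotient X).exists_ne_one_mem_center_of_normal hne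
  have hcX : c ∉ X := by rwa [Ne, QuotientGroup.mk'_apply, QuotientGroup.eq_one_iff] at hc1
  have := normal_sup_zpowers_of_mk_mem_center hcZ
  refine hcX (mem_oliverSubgroup_of_commutator_mem hp (M := X ⊓ Omega1 p (centralizer X))
    inf_le_right (fun m hm => hcC m hm.1) fun w hw => ⟨?_, ?_⟩)
  · exact commutator_mem_of_mk_mem_center hcZ w
  · exact commutator_le_left _ ⊤ (commutator_mem_commutator hw (mem_top c))

end OliverSubgroup

section MaximalRank

variable {G : Type*} [Group G] {p : ℕ} [Fact p.Prime] [Finite G]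

-- `(X ∩ E)N` is elementary abelian, so it is no larger than `E`, which exceeds `X ∩ E` by a
-- factor `p`.
theorem card_range_commutatorHom_le (hG : IsPGroup p G) {N X E : Subgroup G} [N.Normal]
    (hN : IsElemAbelian p N) (hNX : N ≤ centralizer (X : Set G)) (hE : IsElemAbelian p E)
    (hErank : elemRank p E = pRank p G) (hXE : X.relIndex E = p) {e : G} (he : e ∈ E) :
    Nat.card (commutatorHom N hN.le_centralizer e).range ≤ p := by
  set F := X ⊓ E
  have hFN : F ≤ centralizer (N : Set G) := inf_le_left.trans (le_centralizer_iff.1 hNX)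
  have hFe : F ≤ centralizer {e} := fun f hf =>
    mem_centralizer_singleton_iff.2 (hE.1 f hf.2 e he)
  have hcard : Nat.card F * F.relIndex (F ⊔ N) ≤ Nat.card F * p := calc
    Nat.card F * F.relIndex (F ⊔ N) = Nat.card (F ⊔ N : Subgroup G) := by
      rw [← relIndex_bot_left, ← relIndex_bot_left, relIndex_mul_relIndex _ _ _ bot_le le_sup_left]
    _ ≤ p ^ pRank p G := card_le_pow_pRank hG (((hE.of_le inf_le_right).sup hN hFN))
    _ = Nat.card E := by rw [card_eq_pow_elemRank hG E, hErank]
    _ = Nat.card F * p := by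
      rw [← hXE, ← inf_relIndex_right, ← relIndex_bot_left, ← relIndex_bot_left,
        relIndex_mul_relIndex _ _ _ bot_le inf_le_right]
  calc Nat.card (commutatorHom N hN.le_centralizer e).range ≤ F.relIndex N :=
        card_range_commutatorHom_le_relIndex _ e hFe
    _ ≤ F.relIndex (F ⊔ N) := relIndex_le_of_le_right le_sup_right FiniteIndex.index_ne_zero
    _ ≤ p := Nat.le_of_mul_le_mul_left hcard Nat.card_pos

theorem mem_oliverSubgroup_of_relIndex_eq (hp : 3 ≤ p) (hG : IsPGroup p G) {E : Subgroup G}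
    (hE : IsElemAbelian p E) (hErank : elemRank p E = pRank p G)
    (hXE : (OliverSubgroup p G).relIndex E = p) {e : G} (he : e ∈ E)
    [(OliverSubgroup p G ⊔ zpowers e).Normal] : e ∈ OliverSubgroup p G := by
  have : (OliverSubgroup p G).Normal := oliverSubgroup_normal
  have hΩ := isElemAbelian_Omega1_centralizer (p := p) (centralizer_oliverSubgroup_le hp hG)
  set Φ := (commutatorHom _ hΩ.le_centralizer e).range
  have hΦΩ : Φ ≤ Omega1 p (centralizer (OliverSubgroup p G : Set G)) :=
    range_commutatorHom_le _ e
  have hΦ : Nat.card Φ ≤ p := card_range_commutatorHom_le hG hΩ (Omega1_le _ _) hE hErank hXE he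
  have heΦ : e ∈ centralizer (Φ : Set G) :=
    mem_centralizer_of_card_le_prime hΦ (fun f hf => hΩ.2 f (hΦΩ hf)) (hE.2 e he)
      fun f hf => conj_mem_range_commutatorHom _ e hf
  exact mem_oliverSubgroup_of_commutator_mem hp hΦΩ heΦ fun w hw => ⟨⟨w, hw⟩, rfl⟩

end MaximalRank

/-- Corollary 3.4: `|J(S)𝔛(S) : 𝔛(S)| ≠ p`. -/
theorem index_ne_p (p : ℕ) [Fact p.Prime] (hp : Odd p)
    (S : Type*) [Group S] [Fintype S] (hS : IsPGroup p S) :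
    (OliverSubgroup p S).relIndex (Thompson p S ⊔ OliverSubgroup p S) ≠ p := by
  intro hindex
  have hp3 : 3 ≤ p := by
    obtain ⟨k, rfl⟩ := hp
    have := (Fact.out : (2 * k + 1).Prime).two_le
    omega
  set X := OliverSubgroup p S
  have : X.Normal := oliverSubgroup_normal
  obtain ⟨E, ⟨hE, hErank⟩, hEX⟩ :
      ∃ E ∈ {E : Subgroup S | IsElemAbelian p E ∧ elemRank p E = pRank p S}, ¬E ≤ X := by
    by_contra! h
    have hJX : Thompson p S ≤ X := sSup_le h
    rw [sup_eq_right.2 hJX, relIndex_self] at hindex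
    exact (Fact.out : p.Prime).one_lt.ne hindex
  obtain ⟨e, heE, heX⟩ := SetLike.not_le_iff_exists.1 hEX
  have hET : E ≤ Thompson p S ⊔ X := le_sup_of_le_left (le_sSup ⟨hE, hErank⟩)
  have hprime : (X.relIndex (Thompson p S ⊔ X)).Prime := by
    rw [hindex]
    exact Fact.out
  have hXE : X.relIndex E = p := by
    rw [← relIndex_sup_right, eq_of_relIndex_prime le_sup_right (sup_le hET le_sup_right) hprime
      fun h => hEX (le_sup_left.trans h), hindex]
  have : (X ⊔ zpowers e).Normal := by
    rw [eq_of_relIndex_prime le_sup_left (sup_le le_sup_right (zpowers_le.2 (hET heE))) hprime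
      fun h => heX (h (mem_sup_right (mem_zpowers e)))]
    infer_instance
  exact heX (mem_oliverSubgroup_of_relIndex_eq hp3 hS hE hErank hXE heE)
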